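/- Let C, D ⊆ ℝ^m be closed convex cones with C ≠ {0} and D ≠ {0}, and let I_m be the identity matrix. Then ‖I_m‖_{C→D} = cos d̄(C,D) and σ_{C→D}(I_m) = sin d̄(C,D°). -/

import Mathlib

open MeasureTheory ProbabilityTheory Metric Set
open scoped InnerProductSpace
open scoped Classical
open scoped Pointwise

noncomputable section

/-- Euclidean space `ℝ^k`. -/
abbrev Euc (k : ℕ) : Type := EuclideanSpace ℝ (Fin k)

/-- The linear action of a matrix `A ∈ ℝ^{n×m}` on Euclidean space, `x ↦ Ax`. -/
def mulE {m n : ℕ} (A : Matrix (Fin n) (Fin m) ℝ) (x : Euc m) : Euc n :=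
  Matrix.toEuclideanLin A x

/-- The metric projection onto a set `S`: the point of `S` closest to `y`
(if a unique closest point characterizing property holds; junk value `0` otherwise). -/
def metricProj {k : ℕ} (S : Set (Euc k)) (y : Euc k) : Euc k :=
  if h : ∃ z, z ∈ S ∧ ∀ w ∈ S, dist y z ≤ dist y w then h.choose else 0

/-- `C` is a closed convex cone (containing the origin). -/
def IsClosedConvexCone {k : ℕ} (C : Set (Euc k)) : Prop :=
  IsClosed C ∧ Convex ℝ C ∧ (∀ c : ℝ, 0 ≤ c → ∀ x ∈ C, c • x ∈ C) ∧ (0 : Euc k) ∈ C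

/-- The polar cone `S° = {z | ⟨x,z⟩ ≤ 0 ∀ x ∈ S}`. -/
def polarCone {k : ℕ} (S : Set (Euc k)) : Set (Euc k) :=
  {z | ∀ x ∈ S, ⟪x, z⟫_ℝ ≤ 0}

/-- The restricted norm `‖A‖_{C→D} = max_{x ∈ C ∩ S^{m-1}} ‖Proj_D (Ax)‖`. -/
def resNorm {m n : ℕ} (C : Set (Euc m)) (D : Set (Euc n)) (A : Matrix (Fin n) (Fin m) ℝ) : ℝ :=
  sSup ((fun x => ‖metricProj D (mulE A x)‖) '' (C ∩ sphere 0 1))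

/-- The restricted singular value `σ_{C→D}(A) = min_{x ∈ C ∩ S^{m-1}} ‖Proj_D (Ax)‖`. -/
def resSval {m n : ℕ} (C : Set (Euc m)) (D : Set (Euc n)) (A : Matrix (Fin n) (Fin m) ℝ) : ℝ :=
  sInf ((fun x => ‖metricProj D (mulE A x)‖) '' (C ∩ sphere 0 1))

/-- The restricted norm for arbitrary (not necessarily closed) cones:
`‖B‖_{K→K'} = sup { ⟨Bx, y⟩ : x ∈ K ∩ B^ℓ, y ∈ K' ∩ B^p }`. -/
def resNormGen {l p : ℕ} (K : Set (Euc l)) (K' : Set (Euc p))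
    (B : Matrix (Fin p) (Fin l) ℝ) : ℝ :=
  sSup (Set.image2 (fun x y => ⟪mulE B x, y⟫_ℝ) (K ∩ closedBall 0 1) (K' ∩ closedBall 0 1))

/-- The operator (spectral) norm of a matrix. -/
def opNorm {m n : ℕ} (A : Matrix (Fin n) (Fin m) ℝ) : ℝ :=
  ‖LinearMap.toContinuousLinearMap (Matrix.toEuclideanLin A)‖

/-- The standard Gaussian measure on `ℝ^k` (i.i.d. N(0,1) coordinates). -/
def stdGaussianE (k : ℕ) : Measure (Euc k) :=
  Measure.map (⇑(EuclideanSpace.equiv (Fin k) ℝ).symm)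
    (Measure.pi fun _ : Fin k => gaussianReal 0 1)

/-- The standard Gaussian measure on `n × m` arrays (i.i.d. N(0,1) entries). -/
def stdGaussianPi (n m : ℕ) : Measure (Fin n → Fin m → ℝ) :=
  Measure.pi fun _ : Fin n => Measure.pi fun _ : Fin m => gaussianReal 0 1

/-- The support function `h_K(x) = sup_{z ∈ K} ⟨x, z⟩`. -/
def suppFn {k : ℕ} (K : Set (Euc k)) (x : Euc k) : ℝ := sSup ((fun z => ⟪x, z⟫_ℝ) '' K)

/-- The capped-angle cosine `cos d̄(X,Y) = max{⟨x,y⟩ : x ∈ X ∩ B, y ∈ Y ∩ B}`. -/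
def cosAng {k : ℕ} (X Y : Set (Euc k)) : ℝ :=
  sSup (Set.image2 (fun x y => ⟪x, y⟫_ℝ) (X ∩ closedBall 0 1) (Y ∩ closedBall 0 1))

/-- `sin d̄(X,Y) = √(1 - cos d̄(X,Y)²)`. -/
def sinAng {k : ℕ} (X Y : Set (Euc k)) : ℝ := Real.sqrt (1 - cosAng X Y ^ 2)

/-- The Kronecker (tensor) product `x ⊗ y ∈ ℝ^{mn}`. -/
def kron {m n : ℕ} (x : Euc m) (y : Euc n) : EuclideanSpace ℝ (Fin m × Fin n) :=
  (EuclideanSpace.equiv (Fin m × Fin n) ℝ).symm (fun p => x p.1 * y p.2)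

/-- The primal feasible set `𝒫(C,D) = {A | ∃ x ∈ C \ {0}, Ax ∈ D°}`. -/
def primalSet {m n : ℕ} (C : Set (Euc m)) (D : Set (Euc n)) :
    Set (Matrix (Fin n) (Fin m) ℝ) :=
  {A | ∃ x ∈ C, x ≠ 0 ∧ mulE A x ∈ polarCone D}

/-- The dual feasible set `𝒟(C,D) = {A | ∃ y ∈ D \ {0}, -Aᵀy ∈ C°}`. -/
def dualSet {m n : ℕ} (C : Set (Euc m)) (D : Set (Euc n)) :
    Set (Matrix (Fin n) (Fin m) ℝ) :=
  {A | ∃ y ∈ D, y ≠ 0 ∧ -(mulE A.transpose y) ∈ polarCone C}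

/-- `K₂` is a `0`-contraction of `K₁`: there are generating sets `M₁` of `K₁`, `M₂` of `K₂`
(i.e. `Kᵢ` is the closed convex hull of `Mᵢ`) and a surjection `φ : M₁ → M₂` that is
`1`-Lipschitz and norm-nonincreasing. -/
def IsZeroContractionOf {E₁ E₂ : Type*} [NormedAddCommGroup E₁] [NormedSpace ℝ E₁]
    [NormedAddCommGroup E₂] [NormedSpace ℝ E₂] (K₁ : Set E₁) (K₂ : Set E₂) : Prop :=
  ∃ (M₁ : Set E₁) (M₂ : Set E₂) (φ : E₁ → E₂),
    closure (convexHull ℝ M₁) = K₁ ∧ closure (convexHull ℝ M₂) = K₂ ∧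
    φ '' M₁ = M₂ ∧
    (∀ x ∈ M₁, ∀ x' ∈ M₁, ‖φ x - φ x'‖ ≤ ‖x - x'‖) ∧
    (∀ x ∈ M₁, ‖φ x‖ ≤ ‖x‖)

/-- The pair `(x, y)` regarded as an element of the Euclidean (ℓ²) product. -/
def pairL2 {m n : ℕ} (x : Euc m) (y : Euc n) : WithLp 2 (Euc m × Euc n) :=
  (WithLp.equiv 2 (Euc m × Euc n)).symm (x, y)

/-- The product `K × K'` as a subset of the Euclidean (ℓ²) product space. -/
def prodL2 {m n : ℕ} (K : Set (Euc m)) (K' : Set (Euc n)) : Set (WithLp 2 (Euc m × Euc n)) :=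
  {q | ((WithLp.equiv 2 (Euc m × Euc n)) q).1 ∈ K ∧ ((WithLp.equiv 2 (Euc m × Euc n)) q).2 ∈ K'}


set_option maxHeartbeats 1000000

lemma mulE_one {m : ℕ} (x : Euc m) : mulE (1 : Matrix (Fin m) (Fin m) ℝ) x = x := by
  simp [mulE, Matrix.toEuclideanLin]

section proj
variable {k : ℕ}

lemma metricProj_spec {S : Set (Euc k)} (hc : IsClosed S) (hconv : Convex ℝ S)
    (hne : S.Nonempty) (y : Euc k) :
    metricProj S y ∈ S ∧ ∀ w ∈ S, dist y (metricProj S y) ≤ dist y w := by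
  have hex : ∃ z, z ∈ S ∧ ∀ w ∈ S, dist y z ≤ dist y w := by
    obtain ⟨v, hv, hmin⟩ := exists_norm_eq_iInf_of_complete_convex hne hc.isComplete hconv y
    refine ⟨v, hv, fun w hw => ?_⟩
    have hb : BddBelow (Set.range fun w : S => ‖y - w‖) :=
      ⟨0, Set.forall_mem_range.2 fun _ => norm_nonneg _⟩
    have : (⨅ w : S, ‖y - w‖) ≤ ‖y - w‖ := ciInf_le hb ⟨w, hw⟩
    rw [dist_eq_norm, dist_eq_norm, hmin]
    exact this
  rw [metricProj, dif_pos hex]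
  exact hex.choose_spec

lemma metricProj_char {S : Set (Euc k)} (hc : IsClosed S) (hconv : Convex ℝ S)
    (hne : S.Nonempty) (y : Euc k) :
    ∀ w ∈ S, ⟪y - metricProj S y, w - metricProj S y⟫_ℝ ≤ 0 := by
  obtain ⟨hmem, hmin⟩ := metricProj_spec hc hconv hne y
  rw [← norm_eq_iInf_iff_real_inner_le_zero hconv hmem]
  haveI : Nonempty S := hne.to_subtype
  have hb : BddBelow (Set.range fun w : S => ‖y - w‖) :=
    ⟨0, Set.forall_mem_range.2 fun _ => norm_nonneg _⟩
  refine le_antisymm (le_ciInf fun w => ?_) (ciInf_le hb ⟨_, hmem⟩)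
  have := hmin w w.2
  rwa [dist_eq_norm, dist_eq_norm] at this

lemma metricProj_eq_of_char {S : Set (Euc k)} (hc : IsClosed S) (hconv : Convex ℝ S)
    {y z : Euc k} (hz : z ∈ S) (h : ∀ w ∈ S, ⟪y - z, w - z⟫_ℝ ≤ 0) :
    metricProj S y = z := by
  have hne : S.Nonempty := ⟨z, hz⟩
  set p := metricProj S y with hp
  have hmem := (metricProj_spec hc hconv hne y).1
  have h1 : ⟪y - p, z - p⟫_ℝ ≤ 0 := metricProj_char hc hconv hne y z hz
  have h2 : ⟪y - z, p - z⟫_ℝ ≤ 0 := h p hmem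
  have h2' : 0 ≤ ⟪y - z, z - p⟫_ℝ := by
    have e : (p : Euc k) - z = -(z - p) := by abel
    rw [e, inner_neg_right] at h2; linarith
  have key : ‖z - p‖ ^ 2 ≤ 0 := by
    have e2 : (y - p) - (y - z) = z - p := by abel
    have e3 : ⟪(y - p) - (y - z), z - p⟫_ℝ = ⟪y - p, z - p⟫_ℝ - ⟪y - z, z - p⟫_ℝ :=
      inner_sub_left _ _ _
    rw [e2, real_inner_self_eq_norm_sq] at e3
    linarith
  have hz0 : z - p = 0 := by
    have := sq_nonneg ‖z - p‖
    have h0 : ‖z - p‖ ^ 2 = 0 := le_antisymm key (by positivity)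
    simpa [pow_eq_zero_iff] using h0
  rw [sub_eq_zero] at hz0
  exact hz0.symm

end proj

section cone
variable {k : ℕ} {D : Set (Euc k)}

lemma IsClosedConvexCone.nonempty (hD : IsClosedConvexCone D) : D.Nonempty := ⟨0, hD.2.2.2⟩

lemma mem_proj (hD : IsClosedConvexCone D) (y : Euc k) : metricProj D y ∈ D :=
  (metricProj_spec hD.1 hD.2.1 hD.nonempty y).1

lemma proj_cone_inner_self (hD : IsClosedConvexCone D) (y : Euc k) :
    ⟪y - metricProj D y, metricProj D y⟫_ℝ = 0 := by
  set p := metricProj D y with hpdef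
  have hmem : p ∈ D := mem_proj hD y
  have hchar := metricProj_char hD.1 hD.2.1 hD.nonempty y
  have h1 := hchar 0 hD.2.2.2
  have h2 := hchar ((2:ℝ) • p) (hD.2.2.1 2 (by norm_num) p hmem)
  rw [zero_sub, inner_neg_right] at h1
  have e : (2:ℝ) • p - p = p := by rw [two_smul]; abel
  rw [e] at h2
  linarith

lemma proj_cone_inner_le (hD : IsClosedConvexCone D) (y : Euc k) :
    ∀ w ∈ D, ⟪y - metricProj D y, w⟫_ℝ ≤ 0 := by
  intro w hw
  have hchar := metricProj_char hD.1 hD.2.1 hD.nonempty y w hw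
  have h0 := proj_cone_inner_self hD y
  have e : ⟪y - metricProj D y, w - metricProj D y⟫_ℝ
      = ⟪y - metricProj D y, w⟫_ℝ - ⟪y - metricProj D y, metricProj D y⟫_ℝ :=
    inner_sub_right _ _ _
  rw [h0] at e; linarith

lemma norm_proj_sq (hD : IsClosedConvexCone D) (y : Euc k) :
    ‖metricProj D y‖ ^ 2 = ⟪y, metricProj D y⟫_ℝ := by
  have h := proj_cone_inner_self hD y
  rw [inner_sub_left, real_inner_self_eq_norm_sq] at h
  linarith

lemma proj_zero (hD : IsClosedConvexCone D) : metricProj D (0 : Euc k) = 0 :=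
  metricProj_eq_of_char hD.1 hD.2.1 hD.2.2.2 (fun w _ => by simp)

lemma proj_smul (hD : IsClosedConvexCone D) (y : Euc k) {c : ℝ} (hc : 0 ≤ c) :
    metricProj D (c • y) = c • metricProj D y := by
  set p := metricProj D y with hpdef
  refine metricProj_eq_of_char hD.1 hD.2.1 (hD.2.2.1 c hc p (mem_proj hD y)) ?_
  intro w hw
  have e : c • y - c • p = c • (y - p) := (smul_sub c y p).symm
  rw [e, real_inner_smul_left]
  have e2 : ⟪y - p, w - c • p⟫_ℝ = ⟪y - p, w⟫_ℝ - ⟪y - p, c • p⟫_ℝ := inner_sub_right _ _ _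
  rw [real_inner_smul_right, proj_cone_inner_self hD y, mul_zero, sub_zero] at e2
  rw [e2]
  exact mul_nonpos_iff.2 (Or.inl ⟨hc, proj_cone_inner_le hD y w hw⟩)

lemma polarCone_icc (D : Set (Euc k)) : IsClosedConvexCone (polarCone D) := by
  refine ⟨?_, ?_, ?_, ?_⟩
  · have e : polarCone D = ⋂ x ∈ D, {z : Euc k | ⟪x, z⟫_ℝ ≤ 0} := by
      ext z; simp [polarCone]
    rw [e]
    exact isClosed_biInter fun x _ =>
      isClosed_le (Continuous.inner continuous_const continuous_id) continuous_const
  · intro a ha b hb s t hs ht hst x hx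
    have e : ⟪x, s • a + t • b⟫_ℝ = s * ⟪x, a⟫_ℝ + t * ⟪x, b⟫_ℝ := by
      rw [inner_add_right, real_inner_smul_right, real_inner_smul_right]
    rw [e]
    have := ha x hx; have := hb x hx
    nlinarith
  · intro c hc z hz x hx
    rw [real_inner_smul_right]
    exact mul_nonpos_iff.2 (Or.inl ⟨hc, hz x hx⟩)
  · intro x _; simp

lemma proj_polar (hD : IsClosedConvexCone D) (y : Euc k) :
    metricProj (polarCone D) y = y - metricProj D y := by
  set p := metricProj D y with hpdef
  have hq : y - p ∈ polarCone D := fun x hx => by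
    rw [real_inner_comm]; exact proj_cone_inner_le hD y x hx
  refine metricProj_eq_of_char (polarCone_icc D).1 (polarCone_icc D).2.1 hq ?_
  intro w hw
  have e : y - (y - p) = p := by abel
  rw [e, inner_sub_right]
  have h1 : ⟪p, w⟫_ℝ ≤ 0 := hw p (mem_proj hD y)
  have h2 : ⟪p, y - p⟫_ℝ = 0 := by rw [real_inner_comm]; exact proj_cone_inner_self hD y
  linarith

lemma proj_pythagoras (hD : IsClosedConvexCone D) (y : Euc k) :
    ‖metricProj D y‖ ^ 2 + ‖metricProj (polarCone D) y‖ ^ 2 = ‖y‖ ^ 2 := by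
  rw [proj_polar hD]
  set p := metricProj D y with hpdef
  have h : ⟪p, y - p⟫_ℝ = 0 := by rw [real_inner_comm]; exact proj_cone_inner_self hD y
  have e : ‖y‖ ^ 2 = ‖p + (y - p)‖ ^ 2 := by rw [add_sub_cancel]
  rw [e, norm_add_sq_real, h]
  ring

lemma proj_lipschitz {S : Set (Euc k)} (hc : IsClosed S) (hcv : Convex ℝ S) (hne : S.Nonempty)
    (y₁ y₂ : Euc k) : ‖metricProj S y₁ - metricProj S y₂‖ ≤ ‖y₁ - y₂‖ := by
  set a := metricProj S y₁ with ha
  set b := metricProj S y₂ with hb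
  have h1 : ⟪y₁ - a, b - a⟫_ℝ ≤ 0 :=
    metricProj_char hc hcv hne y₁ b ((metricProj_spec hc hcv hne y₂).1)
  have h2 : ⟪y₂ - b, a - b⟫_ℝ ≤ 0 :=
    metricProj_char hc hcv hne y₂ a ((metricProj_spec hc hcv hne y₁).1)
  have e1 : 0 ≤ ⟪y₁ - a, a - b⟫_ℝ := by
    have e : (b : Euc k) - a = -(a - b) := by abel
    rw [e, inner_neg_right] at h1; linarith
  have key : ‖a - b‖ ^ 2 ≤ ⟪y₁ - y₂, a - b⟫_ℝ := by
    have e3 : ⟪(y₁ - y₂) - (a - b), a - b⟫_ℝ = ⟪y₁ - y₂, a - b⟫_ℝ - ⟪a - b, a - b⟫_ℝ :=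
      inner_sub_left _ _ _
    have e4 : (y₁ - y₂) - (a - b) = (y₁ - a) - (y₂ - b) := by abel
    have e5 : ⟪(y₁ - a) - (y₂ - b), a - b⟫_ℝ = ⟪y₁ - a, a - b⟫_ℝ - ⟪y₂ - b, a - b⟫_ℝ :=
      inner_sub_left _ _ _
    rw [e4, e5, real_inner_self_eq_norm_sq] at e3
    linarith
  have cs : ⟪y₁ - y₂, a - b⟫_ℝ ≤ ‖y₁ - y₂‖ * ‖a - b‖ := real_inner_le_norm _ _
  nlinarith [norm_nonneg (a - b), norm_nonneg (y₁ - y₂)]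

end cone
section main
variable {m : ℕ} {C D : Set (Euc m)}

lemma sphere_inter_nonempty (hC : IsClosedConvexCone C) (hCne : C ≠ {0}) :
    (C ∩ sphere 0 1).Nonempty := by
  obtain ⟨x, hx, hx0⟩ : ∃ x ∈ C, x ≠ 0 := by
    by_contra h; push_neg at h
    exact hCne (Set.eq_singleton_iff_unique_mem.2 ⟨hC.2.2.2, fun y hy => h y hy⟩)
  refine ⟨‖x‖⁻¹ • x, hC.2.2.1 _ (by positivity) x hx, ?_⟩
  rw [mem_sphere_zero_iff_norm, norm_smul, norm_inv, norm_norm,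
    inv_mul_cancel₀ (norm_ne_zero_iff.2 hx0)]
lemma cos_mem_aux {X Y : Set (Euc m)} (h0X : (0:Euc m) ∈ X) (h0Y : (0:Euc m) ∈ Y) :
    (0:ℝ) ∈ Set.image2 (fun x y => ⟪x, y⟫_ℝ) (X ∩ closedBall 0 1) (Y ∩ closedBall 0 1) := by
  refine ⟨0, ⟨h0X, by simp⟩, 0, ⟨h0Y, by simp⟩, by simp⟩

lemma cos_bddAbove {X Y : Set (Euc m)} :
    BddAbove (Set.image2 (fun x y => ⟪x, y⟫_ℝ) (X ∩ closedBall 0 1) (Y ∩ closedBall 0 1)) := by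
  refine ⟨1, ?_⟩
  rintro v ⟨x, ⟨_, hx⟩, y, ⟨_, hy⟩, rfl⟩
  rw [mem_closedBall, dist_zero_right] at hx hy
  calc ⟪x, y⟫_ℝ ≤ ‖x‖ * ‖y‖ := real_inner_le_norm _ _
    _ ≤ 1 * 1 := by apply mul_le_mul hx hy (norm_nonneg _) zero_le_one
    _ = 1 := by ring

lemma cosAng_le_one {X Y : Set (Euc m)} (h0X : (0:Euc m) ∈ X) (h0Y : (0:Euc m) ∈ Y) :
    cosAng X Y ≤ 1 := csSup_le ⟨0, cos_mem_aux h0X h0Y⟩ (fun v hv => by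
  obtain ⟨x, ⟨_, hx⟩, y, ⟨_, hy⟩, rfl⟩ := hv
  rw [mem_closedBall, dist_zero_right] at hx hy
  calc ⟪x, y⟫_ℝ ≤ ‖x‖ * ‖y‖ := real_inner_le_norm _ _
    _ ≤ 1 * 1 := by apply mul_le_mul hx hy (norm_nonneg _) zero_le_one
    _ = 1 := by ring)

lemma cosAng_nonneg {X Y : Set (Euc m)} (h0X : (0:Euc m) ∈ X) (h0Y : (0:Euc m) ∈ Y) :
    0 ≤ cosAng X Y := le_csSup cos_bddAbove (cos_mem_aux h0X h0Y)

lemma proj_norm_bddAbove (hD : IsClosedConvexCone D) :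
    BddAbove ((fun x => ‖metricProj D x‖) '' (C ∩ sphere 0 1)) := by
  refine ⟨1, ?_⟩
  rintro v ⟨x, ⟨_, hx⟩, rfl⟩
  rw [mem_sphere_zero_iff_norm] at hx
  have := proj_lipschitz hD.1 hD.2.1 hD.nonempty x 0
  rw [proj_zero hD, sub_zero, sub_zero, hx] at this
  exact this

lemma sup_proj_eq_cos (hC : IsClosedConvexCone C) (hCne : C ≠ {0}) (hD : IsClosedConvexCone D) :
    sSup ((fun x => ‖metricProj D x‖) '' (C ∩ sphere 0 1)) = cosAng C D := by
  obtain ⟨x₀, hx₀⟩ := sphere_inter_nonempty hC hCne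
  have himgne : ((fun x => ‖metricProj D x‖) '' (C ∩ sphere 0 1)).Nonempty :=
    ⟨_, Set.mem_image_of_mem _ hx₀⟩
  have hsup_nonneg : 0 ≤ sSup ((fun x => ‖metricProj D x‖) '' (C ∩ sphere 0 1)) :=
    le_trans (norm_nonneg _) (le_csSup (proj_norm_bddAbove hD) (Set.mem_image_of_mem _ hx₀))
  apply le_antisymm
  · refine csSup_le himgne ?_
    rintro v ⟨x, ⟨hxC, hxS⟩, rfl⟩
    rw [mem_sphere_zero_iff_norm] at hxS
    set p := metricProj D x with hpdef
    refine le_csSup cos_bddAbove ?_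
    by_cases hp : p = 0
    · refine ⟨x, ⟨hxC, by simp [mem_closedBall, dist_zero_right, hxS]⟩, 0, ⟨hD.2.2.2, by simp⟩, ?_⟩
      show ⟪x, 0⟫_ℝ = ‖p‖
      rw [hp]; simp
    · refine ⟨x, ⟨hxC, by simp [mem_closedBall, dist_zero_right, hxS]⟩, ‖p‖⁻¹ • p,
        ⟨hD.2.2.1 _ (by positivity) p (mem_proj hD x), ?_⟩, ?_⟩
      · rw [mem_closedBall, dist_zero_right, norm_smul, norm_inv, norm_norm]
        rw [inv_mul_cancel₀ (norm_ne_zero_iff.2 hp)]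
      · show ⟪x, ‖p‖⁻¹ • p⟫_ℝ = ‖p‖
        rw [real_inner_smul_right, ← norm_proj_sq hD x, ← hpdef]
        field_simp [norm_ne_zero_iff.2 hp]
  · refine csSup_le ⟨0, cos_mem_aux hC.2.2.2 hD.2.2.2⟩ ?_
    rintro v ⟨x, ⟨hxC, hxB⟩, y, ⟨hyD, hyB⟩, rfl⟩
    rw [mem_closedBall, dist_zero_right] at hxB hyB
    have step1 : ⟪x, y⟫_ℝ ≤ ‖metricProj D x‖ := by
      have h1 : ⟪x - metricProj D x, y⟫_ℝ ≤ 0 := proj_cone_inner_le hD x y hyD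
      have h2 : ⟪x, y⟫_ℝ - ⟪metricProj D x, y⟫_ℝ ≤ 0 := by
        rw [← inner_sub_left]; exact h1
      have h3 : ⟪metricProj D x, y⟫_ℝ ≤ ‖metricProj D x‖ * ‖y‖ := real_inner_le_norm _ _
      have h4 : ‖metricProj D x‖ * ‖y‖ ≤ ‖metricProj D x‖ * 1 :=
        mul_le_mul_of_nonneg_left hyB (norm_nonneg _)
      linarith
    by_cases hx0 : x = 0
    · rw [hx0]; simp only [inner_zero_left]; exact hsup_nonneg
    · set xh : Euc m := ‖x‖⁻¹ • x with hxh
      have hxhS : xh ∈ C ∩ sphere 0 1 := by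
        refine ⟨hC.2.2.1 _ (by positivity) x hxC, ?_⟩
        rw [mem_sphere_zero_iff_norm, hxh, norm_smul, norm_inv, norm_norm,
          inv_mul_cancel₀ (norm_ne_zero_iff.2 hx0)]
      have hrec : x = ‖x‖ • xh := by
        rw [hxh, smul_smul, mul_inv_cancel₀ (norm_ne_zero_iff.2 hx0), one_smul]
      have hps : metricProj D x = ‖x‖ • metricProj D xh := by
        conv_lhs => rw [hrec]
        exact proj_smul hD xh (norm_nonneg x)
      have step2 : ‖metricProj D x‖ ≤ ‖metricProj D xh‖ := by
        rw [hps, norm_smul, norm_norm]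
        have := norm_nonneg (metricProj D xh)
        nlinarith
      have step3 : ‖metricProj D xh‖ ≤ sSup ((fun x => ‖metricProj D x‖) '' (C ∩ sphere 0 1)) :=
        le_csSup (proj_norm_bddAbove hD) (Set.mem_image_of_mem _ hxhS)
      linarith

end main

/-- For nonzero closed convex cones `C, D ⊆ ℝ^m`:
`‖I_m‖_{C→D} = cos d̄(C,D)` and `σ_{C→D}(I_m) = sin d̄(C,D°)`. -/
theorem statement6 {m : ℕ} (C D : Set (Euc m))
    (hC : IsClosedConvexCone C) (hCne : C ≠ {0})
    (hD : IsClosedConvexCone D) (hDne : D ≠ {0}) :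
    resNorm C D (1 : Matrix (Fin m) (Fin m) ℝ) = cosAng C D ∧
    resSval C D (1 : Matrix (Fin m) (Fin m) ℝ) = sinAng C (polarCone D) := by
  have hfun : (fun x : Euc m => ‖metricProj D (mulE (1 : Matrix (Fin m) (Fin m) ℝ) x)‖)
      = fun x => ‖metricProj D x‖ := funext fun x => by rw [mulE_one]
  constructor
  · rw [resNorm, hfun, sup_proj_eq_cos hC hCne hD]
  · rw [resSval, hfun]
    set P := polarCone D with hPdef
    have hP : IsClosedConvexCone P := polarCone_icc D
    set M := cosAng C P with hMdef
    have hMsup : sSup ((fun x => ‖metricProj P x‖) '' (C ∩ sphere 0 1)) = M :=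
      sup_proj_eq_cos hC hCne hP
    have hK : IsCompact (C ∩ sphere 0 1) := (isCompact_sphere (0 : Euc m) 1).inter_left hC.1
    have hKne : (C ∩ sphere 0 1).Nonempty := sphere_inter_nonempty hC hCne
    have hcont : Continuous (metricProj P) := by
      refine (LipschitzWith.of_dist_le_mul (K := 1) (fun a b => ?_)).continuous
      rw [NNReal.coe_one, one_mul, dist_eq_norm, dist_eq_norm]
      exact proj_lipschitz hP.1 hP.2.1 hP.nonempty a b
    have hg : Continuous fun x => ‖metricProj P x‖ := hcont.norm
    obtain ⟨x₀, hx₀mem, hx₀max'⟩ := hK.exists_isMaxOn hKne hg.continuousOn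
    have hx₀max : ∀ x ∈ C ∩ sphere 0 1, ‖metricProj P x‖ ≤ ‖metricProj P x₀‖ :=
      fun x hx => hx₀max' hx
    have hM0 : ‖metricProj P x₀‖ = M := by
      refine le_antisymm ?_ ?_
      · rw [← hMsup]
        exact le_csSup (proj_norm_bddAbove hP) (Set.mem_image_of_mem _ hx₀mem)
      · rw [← hMsup]
        refine csSup_le ⟨_, Set.mem_image_of_mem _ hx₀mem⟩ ?_
        rintro v ⟨x, hx, rfl⟩
        exact hx₀max x hx
    have hMle1 : M ≤ 1 := cosAng_le_one hC.2.2.2 hP.2.2.2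
    have hMnn : 0 ≤ M := cosAng_nonneg hC.2.2.2 hP.2.2.2
    have hpyth : ∀ x ∈ C ∩ sphere 0 1,
        ‖metricProj D x‖ ^ 2 = 1 - ‖metricProj P x‖ ^ 2 := by
      intro x hx
      have := proj_pythagoras hD x
      rw [mem_sphere_zero_iff_norm.1 hx.2] at this
      rw [hPdef]
      linarith [this]
    have hx₀val : ‖metricProj D x₀‖ = Real.sqrt (1 - M ^ 2) := by
      have h1 : ‖metricProj D x₀‖ ^ 2 = 1 - M ^ 2 := by
        rw [hpyth x₀ hx₀mem, hM0]
      rw [← h1, Real.sqrt_sq (norm_nonneg _)]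
    have hlb : ∀ x ∈ C ∩ sphere 0 1, Real.sqrt (1 - M ^ 2) ≤ ‖metricProj D x‖ := by
      intro x hx
      have hgle : ‖metricProj P x‖ ≤ M := by rw [← hM0]; exact hx₀max x hx
      have hgnn : 0 ≤ ‖metricProj P x‖ := norm_nonneg _
      have h1 : 1 - M ^ 2 ≤ ‖metricProj D x‖ ^ 2 := by
        rw [hpyth x hx]; nlinarith
      calc Real.sqrt (1 - M ^ 2) ≤ Real.sqrt (‖metricProj D x‖ ^ 2) := Real.sqrt_le_sqrt h1
        _ = ‖metricProj D x‖ := Real.sqrt_sq (norm_nonneg _)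
    rw [sinAng, ← hMdef]
    refine le_antisymm ?_ ?_
    · have : sInf ((fun x => ‖metricProj D x‖) '' (C ∩ sphere 0 1)) ≤ ‖metricProj D x₀‖ :=
        csInf_le ⟨0, fun v hv => by obtain ⟨x, _, rfl⟩ := hv; exact norm_nonneg _⟩
          (Set.mem_image_of_mem _ hx₀mem)
      rwa [hx₀val] at this
    · refine le_csInf ⟨_, Set.mem_image_of_mem _ hx₀mem⟩ ?_
      rintro v ⟨x, hx, rfl⟩
      exact hlb x hx


end
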